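/- arXiv:0712.3146 — 2 statements merged into one kernel-verified Lean document; each statement's English description precedes it below -/
import Mathlib

section
/- (GainConn) In the dynamic epistemic logic axiomatization of the muddy children puzzle, for every j ≥ 1 the knowledge gain lemma is derivable: ⊢ E_G E_G λ_j → [*] E_G λ_{j+1}, i.e., if every child knows that every child knows there are at least j muddy children, then after Father's injunction every child knows there are at least j+1 muddy children. -/
/-!
`K_i` and `[*]` are normal modal operators, and by `Def_E` so is `E_G`; in particular `E_G`
is monotone and distributes over conjunction. Since `G` is nonempty, `E_G` is factive, so
`E_G E_G λ_j` yields `E_G λ_j`, which persists through `[*]` because `λ_j` does and `KT1` carries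
persistence through each `K_i`. Together with `MC2` this gives `[*] (E_G λ_j ∧ E_G ¬ε_j)`, that is
`[*] E_G (λ_j ∧ ¬ε_j)`, and `EQ_λε` turns `λ_j ∧ ¬ε_j` into `λ_{j+1}` under both modalities.
-/

/-- Formulas of dynamic epistemic logic with common knowledge. -/
inductive Form (Atom Agent Event : Type) : Type
  | atom : Atom → Form Atom Agent Event
  | tru  : Form Atom Agent Event
  | imp  : Form Atom Agent Event → Form Atom Agent Event → Form Atom Agent Event
  | and  : Form Atom Agent Event → Form Atom Agent Event → Form Atom Agent Event
  | or   : Form Atom Agent Event → Form Atom Agent Event → Form Atom Agent Event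
  | not  : Form Atom Agent Event → Form Atom Agent Event
  | K    : Agent → Form Atom Agent Event → Form Atom Agent Event
  | C    : List Agent → Form Atom Agent Event → Form Atom Agent Event
  | E    : List Agent → Form Atom Agent Event → Form Atom Agent Event
  | box  : Event → Form Atom Agent Event → Form Atom Agent Event

namespace Form

variable {Atom Agent Event : Type}

def iff (p q : Form Atom Agent Event) : Form Atom Agent Event :=
  Form.and (Form.imp p q) (Form.imp q p)

/-- The conjunction ⋀_{i ∈ G} K_i p. -/
def conjK (G : List Agent) (p : Form Atom Agent Event) : Form Atom Agent Event :=
  match G with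
  | [] => Form.tru
  | i :: G' => Form.and (Form.K i p) (conjK G' p)

/-- Classical boolean evaluation, treating atoms and modal subformulas as opaque
(evaluated by the valuation `v`).  A formula is a classical tautology iff it
evaluates to `true` under every such valuation. -/
def evalC (v : Form Atom Agent Event → Bool) : Form Atom Agent Event → Bool
  | Form.tru => true
  | Form.imp p q => !(evalC v p) || evalC v q
  | Form.and p q => evalC v p && evalC v q
  | Form.or p q => evalC v p || evalC v q
  | Form.not p => !(evalC v p)
  | p => v p

/-- Hilbert-style derivability for the system 𝒯^{C[α]}_G, with an extra set `Ax`
of proper axioms. -/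
inductive Prf (Ax : Form Atom Agent Event → Prop) : Form Atom Agent Event → Prop
  | ax {p} : Ax p → Prf Ax p
  | taut {p} : (∀ v, evalC v p = true) → Prf Ax p
  | mp {p q} : Prf Ax p → Prf Ax (Form.imp p q) → Prf Ax q
  | kK (i : Agent) (p q : Form Atom Agent Event) :
      Prf Ax (Form.imp (Form.K i p) (Form.imp (Form.K i (Form.imp p q)) (Form.K i q)))
  | tK (i : Agent) (p : Form Atom Agent Event) : Prf Ax (Form.imp (Form.K i p) p)
  | genK (i : Agent) {p} : Prf Ax p → Prf Ax (Form.K i p)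
  | kBox (a : Event) (p q : Form Atom Agent Event) :
      Prf Ax (Form.imp (Form.box a p) (Form.imp (Form.box a (Form.imp p q)) (Form.box a q)))
  | tBox (a : Event) (p : Form Atom Agent Event) : Prf Ax (Form.imp (Form.box a p) p)
  | genBox (a : Event) {p} : Prf Ax p → Prf Ax (Form.box a p)
  | defE (G : List Agent) (p : Form Atom Agent Event) :
      Prf Ax (Form.iff (Form.E G p) (Form.conjK G p))
  | fixC (G : List Agent) (p : Form Atom Agent Event) :
      Prf Ax (Form.imp (Form.C G p) (Form.and p (Form.E G (Form.C G p))))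
  | gfpC {G : List Agent} {p r : Form Atom Agent Event} :
      Prf Ax (Form.imp r (Form.and p (Form.E G r))) → Prf Ax (Form.imp r (Form.C G p))
  | kt1 (i : Agent) (a : Event) (p : Form Atom Agent Event) :
      Prf Ax (Form.imp (Form.K i (Form.box a p)) (Form.box a (Form.K i p)))

/-- n-fold iterated shared knowledge E_G^n. -/
def iterE (G : List Agent) : ℕ → Form Atom Agent Event → Form Atom Agent Event
  | 0, p => p
  | n+1, p => Form.E G (iterE G n p)

/-- k-fold iterated dynamic modality [α]^k. -/
def iterBox (a : Event) : ℕ → Form Atom Agent Event → Form Atom Agent Event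
  | 0, p => p
  | n+1, p => Form.box a (iterBox a n p)

end Form

/-- The empty set of proper axioms. -/
def NoAx {Atom Agent Event : Type} : Form Atom Agent Event → Prop := fun _ => False

/-- Atomic propositions of the muddy children puzzle. -/
inductive MCAtom : Type
  | lam : ℕ → MCAtom   -- at least j children are muddy
  | eps : ℕ → MCAtom   -- exactly j children are muddy
  | mu  : ℕ → MCAtom   -- child i is muddy

abbrev MForm (Event : Type) := Form MCAtom ℕ Event

def lam {Event : Type} (j : ℕ) : MForm Event := Form.atom (MCAtom.lam j)
def eps {Event : Type} (j : ℕ) : MForm Event := Form.atom (MCAtom.eps j)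
def mud {Event : Type} (i : ℕ) : MForm Event := Form.atom (MCAtom.mu i)


namespace Form

variable {Atom Agent Event : Type} {Ax : Form Atom Agent Event → Prop}

theorem Prf.mp₂_taut {p q r : Form Atom Agent Event} (hp : Prf Ax p) (hq : Prf Ax q)
    (ht : ∀ v, evalC v (p.imp (q.imp r)) = true) : Prf Ax r :=
  hq.mp (hp.mp (Prf.taut ht))

theorem Prf.imp_trans {p q r : Form Atom Agent Event}
    (hpq : Prf Ax (p.imp q)) (hqr : Prf Ax (q.imp r)) : Prf Ax (p.imp r) :=
  hpq.mp₂_taut hqr fun v => by simp only [evalC]; grind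

theorem Prf.imp_and {p q r : Form Atom Agent Event}
    (hq : Prf Ax (p.imp q)) (hr : Prf Ax (p.imp r)) : Prf Ax (p.imp (q.and r)) :=
  hq.mp₂_taut hr fun v => by simp only [evalC]; grind

theorem Prf.iff_mp {p q : Form Atom Agent Event} (h : Prf Ax (p.iff q)) : Prf Ax (p.imp q) :=
  h.mp (Prf.taut fun v => by simp only [evalC, iff]; grind)

theorem Prf.iff_mpr {p q : Form Atom Agent Event} (h : Prf Ax (p.iff q)) : Prf Ax (q.imp p) :=
  h.mp (Prf.taut fun v => by simp only [evalC, iff]; grind)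

structure IsNormal (Ax : Form Atom Agent Event → Prop)
    (M : Form Atom Agent Event → Form Atom Agent Event) : Prop where
  distrib (p q : Form Atom Agent Event) : Prf Ax ((M p).imp ((M (p.imp q)).imp (M q)))
  nec {p : Form Atom Agent Event} : Prf Ax p → Prf Ax (M p)

namespace IsNormal

variable {M N : Form Atom Agent Event → Form Atom Agent Event}

theorem mono (hM : IsNormal Ax M) {p q : Form Atom Agent Event} (h : Prf Ax (p.imp q)) :
    Prf Ax ((M p).imp (M q)) :=
  (hM.nec h).mp₂_taut (hM.distrib p q) fun v => by simp only [evalC]; grind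

theorem and_imp (hM : IsNormal Ax M) (p q : Form Atom Agent Event) :
    Prf Ax (((M p).and (M q)).imp (M (p.and q))) :=
  have hpair : Prf Ax ((M p).imp (M (q.imp (p.and q)))) :=
    hM.mono (Prf.taut fun v => by simp only [evalC]; grind)
  hpair.mp₂_taut (hM.distrib q (p.and q)) fun v => by simp only [evalC]; grind

theorem of_iff (hM : IsNormal Ax M) {M' : Form Atom Agent Event → Form Atom Agent Event}
    (h : ∀ p, Prf Ax ((M' p).iff (M p))) : IsNormal Ax M' where
  distrib p q := by
    have h₁ : Prf Ax ((M' p).imp ((M (p.imp q)).imp (M q))) :=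
      (h p).iff_mp.imp_trans (hM.distrib p q)
    have h₂ : Prf Ax ((M' p).imp ((M' (p.imp q)).imp (M q))) :=
      h₁.mp₂_taut (h (p.imp q)).iff_mp fun v => by simp only [evalC]; grind
    exact h₂.mp₂_taut (h q).iff_mpr fun v => by simp only [evalC]; grind
  nec hp := (hM.nec hp).mp (h _).iff_mpr

theorem const_tru : IsNormal Ax fun _ => (tru : Form Atom Agent Event) where
  distrib _ _ := Prf.taut fun v => by simp only [evalC]; grind
  nec _ := Prf.taut fun v => by simp only [evalC]

theorem and (hM : IsNormal Ax M) (hN : IsNormal Ax N) :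
    IsNormal Ax fun p => (M p).and (N p) where
  distrib p q := (hM.distrib p q).mp₂_taut (hN.distrib p q) fun v => by simp only [evalC]; grind
  nec hp := (hM.nec hp).mp₂_taut (hN.nec hp) fun v => by simp only [evalC]; grind

end IsNormal

theorem isNormal_K (i : Agent) : IsNormal Ax (K (Event := Event) i) :=
  ⟨Prf.kK i, Prf.genK i⟩

theorem isNormal_box (a : Event) : IsNormal Ax (box (Atom := Atom) (Agent := Agent) a) :=
  ⟨Prf.kBox a, Prf.genBox a⟩

theorem isNormal_conjK (G : List Agent) :
    IsNormal Ax (conjK (Atom := Atom) (Event := Event) G) := by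
  induction G with
  | nil => exact IsNormal.const_tru
  | cons i G ih => exact (isNormal_K i).and ih

theorem isNormal_E (G : List Agent) : IsNormal Ax (E (Atom := Atom) (Event := Event) G) :=
  (isNormal_conjK G).of_iff (Prf.defE G)

theorem Prf.E_imp_self {G : List Agent} (hG : G ≠ []) (p : Form Atom Agent Event) :
    Prf Ax ((E G p).imp p) := by
  obtain ⟨i, G, rfl⟩ := List.exists_cons_of_ne_nil hG
  have hK : Prf Ax ((conjK (i :: G) p).imp (K i p)) :=
    Prf.taut fun v => by simp only [conjK, evalC]; grind
  exact (Prf.defE _ p).iff_mp.imp_trans (hK.imp_trans (Prf.tK i p))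

theorem Prf.K_imp_box_K (i : Agent) {a : Event} {p : Form Atom Agent Event}
    (h : Prf Ax (p.imp (box a p))) : Prf Ax ((K i p).imp (box a (K i p))) :=
  ((isNormal_K i).mono h).imp_trans (Prf.kt1 i a p)

theorem Prf.and_imp_box_and {a : Event} {p q : Form Atom Agent Event}
    (hp : Prf Ax (p.imp (box a p))) (hq : Prf Ax (q.imp (box a q))) :
    Prf Ax ((p.and q).imp (box a (p.and q))) :=
  have hboth : Prf Ax ((p.and q).imp ((box a p).and (box a q))) :=
    hp.mp₂_taut hq fun v => by simp only [evalC]; grind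
  hboth.imp_trans ((isNormal_box a).and_imp p q)

theorem Prf.conjK_imp_box_conjK (G : List Agent) {a : Event} {p : Form Atom Agent Event}
    (h : Prf Ax (p.imp (box a p))) : Prf Ax ((conjK G p).imp (box a (conjK G p))) := by
  induction G with
  | nil =>
    have htru : Prf Ax (box a (tru : Form Atom Agent Event)) :=
      (isNormal_box a).nec (Prf.taut fun _ => rfl)
    exact htru.mp (Prf.taut fun v => by simp only [conjK, evalC]; grind)
  | cons i G ih => exact (Prf.K_imp_box_K i h).and_imp_box_and ih

theorem Prf.E_imp_box_E (G : List Agent) {a : Event} {p : Form Atom Agent Event}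
    (h : Prf Ax (p.imp (box a p))) : Prf Ax ((E G p).imp (box a (E G p))) :=
  ((Prf.defE G p).iff_mp.imp_trans (Prf.conjK_imp_box_conjK G h)).imp_trans
    ((isNormal_box a).mono (Prf.defE G p).iff_mpr)

end Form

/-- (GainConn) ⊢ E_G E_G λ_j → [*] E_G λ_{j+1} for j ≥ 1. -/
theorem gainConn {Event : Type} (Ax : MForm Event → Prop)
    (G : List ℕ) (hG : G ≠ []) (st : Event)
    (hMC2 : ∀ j : ℕ, 1 ≤ j →
      Form.Prf Ax (Form.imp (Form.E G (Form.E G (lam j)))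
        (Form.box st (Form.E G (Form.not (eps j))))))
    (hPers : ∀ j : ℕ, Form.Prf Ax (Form.imp (lam j) (Form.box st (lam j))))
    (hEQ : ∀ j : ℕ, Form.Prf Ax (Form.iff (eps j) (Form.and (lam j) (Form.not (lam (j+1)))))) :
    ∀ j : ℕ, 1 ≤ j →
      Form.Prf Ax (Form.imp (Form.E G (Form.E G (lam j)))
        (Form.box st (Form.E G (lam (j+1))))) := by
  intro j hj
  have hknows :
      Form.Prf Ax ((Form.E G (Form.E G (lam j))).imp (Form.box st (Form.E G (lam j)))) :=
    (Form.Prf.E_imp_self hG _).imp_trans (Form.Prf.E_imp_box_E G (hPers j))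
  have hIMP : Form.Prf Ax (((lam j).and (Form.not (eps j))).imp (lam (j+1))) :=
    (hEQ j).mp (Form.Prf.taut fun v => by simp only [Form.evalC, Form.iff]; grind)
  have hE := Form.isNormal_E (Ax := Ax) (Event := Event) G
  have hbox := Form.isNormal_box (Ax := Ax) (Atom := MCAtom) (Agent := ℕ) st
  exact (hknows.imp_and (hMC2 j hj)).imp_trans ((hbox.and_imp _ _).imp_trans
    (hbox.mono ((hE.and_imp _ _).imp_trans (hE.mono hIMP))))
end

section
/- (PointImpProgr) In the muddy children axiomatization, for all natural numbers c and j with 1 ≤ j ≤ c+1: ⊢ [¤] TRUE → [*]^{j-1} E_G^{c-j+1} λ_j, where [*]^k denotes k iterations of the injunction modality and E_G^n denotes n-fold shared knowledge. -/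
/-!
Common knowledge of `λ₁` gives `E_G^n λ₁` for every `n`. Each round of `[*]` trades one level
of shared knowledge for one more muddy child: from `E_G^{n+2} λ_j`, persistence and KT1 give
`[*] E_G^{n+1} λ_j`, MC2 gives `[*] E_G^{n+1} ¬ε_j`, and `λ_j ∧ ¬ε_j → λ_{j+1}` by EQ_λε.
Induction on `j`, with the depth of shared knowledge left arbitrary, yields
`[*]^{j-1} E_G^n λ_j` for all `n`.
-/

namespace Form

variable {Atom Agent Event : Type} {Ax : Form Atom Agent Event → Prop}
  {p q r s : Form Atom Agent Event}

namespace Prf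

theorem imp_trans_s11 (h₁ : Prf Ax (p.imp q)) (h₂ : Prf Ax (q.imp r)) : Prf Ax (p.imp r) :=
  h₂.mp (h₁.mp (taut fun v => by simp only [evalC]; grind))

theorem imp_mp₂ (h₁ : Prf Ax (p.imp q)) (h₂ : Prf Ax (p.imp r))
    (h : Prf Ax (q.imp (r.imp s))) : Prf Ax (p.imp s) :=
  h.mp (h₂.mp (h₁.mp (taut fun v => by simp only [evalC]; grind)))

theorem imp_swap (h : Prf Ax (p.imp (q.imp r))) : Prf Ax (q.imp (p.imp r)) :=
  h.mp (taut fun v => by simp only [evalC]; grind)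

theorem imp_self : Prf Ax (p.imp p) :=
  taut fun v => by simp only [evalC]; grind

theorem imp_intro (h : Prf Ax q) : Prf Ax (p.imp q) :=
  h.mp (taut fun v => by simp only [evalC]; grind)

theorem and_left : Prf Ax ((p.and q).imp p) :=
  taut fun v => by simp only [evalC]; grind

theorem and_right : Prf Ax ((p.and q).imp q) :=
  taut fun v => by simp only [evalC]; grind

theorem iff_mp_s11 (h : Prf Ax (p.iff q)) : Prf Ax (p.imp q) :=
  h.mp and_left

theorem iff_mpr_s11 (h : Prf Ax (p.iff q)) : Prf Ax (q.imp p) :=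
  h.mp and_right

end Prf

/-- Regularity in the sense of Chellas: closure under `(p ∧ q → r) / (M p ∧ M q → M r)`,
in curried form. -/
structure IsRegular (Ax : Form Atom Agent Event → Prop)
    (M : Form Atom Agent Event → Form Atom Agent Event) : Prop where
  imp_imp {p q r : Form Atom Agent Event} :
    Prf Ax (p.imp (q.imp r)) → Prf Ax ((M p).imp ((M q).imp (M r)))

namespace IsRegular

variable {M N : Form Atom Agent Event → Form Atom Agent Event}

theorem mono (hM : IsRegular Ax M) (h : Prf Ax (p.imp q)) : Prf Ax ((M p).imp (M q)) :=
  Prf.imp_mp₂ Prf.imp_self Prf.imp_self <|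
    hM.imp_imp (h.mp (Prf.taut fun v => by simp only [evalC]; grind))

theorem of_normal (hK : ∀ p q, Prf Ax ((M p).imp ((M (p.imp q)).imp (M q))))
    (hN : ∀ {p}, Prf Ax p → Prf Ax (M p)) : IsRegular Ax M where
  imp_imp h := ((hN h).mp (hK _ _).imp_swap).imp_trans_s11 (hK _ _).imp_swap

theorem and (hM : IsRegular Ax M) (hN : IsRegular Ax N) :
    IsRegular Ax fun p => (M p).and (N p) where
  imp_imp h :=
    (hN.imp_imp h).mp ((hM.imp_imp h).mp (Prf.taut fun v => by simp only [evalC]; grind))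

theorem of_iff (hN : IsRegular Ax N) (hMN : ∀ p, Prf Ax ((M p).iff (N p))) : IsRegular Ax M where
  imp_imp {p q r} h := (hMN r).iff_mpr_s11.mp <| (hMN q).iff_mp_s11.mp <| (hMN p).iff_mp_s11.mp <|
    (hN.imp_imp h).mp (Prf.taut fun v => by simp only [evalC]; grind)

theorem iterate (hM : IsRegular Ax M) : ∀ n, IsRegular Ax M^[n]
  | 0 => ⟨id⟩
  | n + 1 => ⟨fun h => (iterate hM n).imp_imp (hM.imp_imp h)⟩

end IsRegular

theorem isRegular_K (i : Agent) : IsRegular Ax (K (Event := Event) i) :=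
  .of_normal (Prf.kK i) (Prf.genK i)

theorem isRegular_box (a : Event) : IsRegular Ax (box (Atom := Atom) (Agent := Agent) a) :=
  .of_normal (Prf.kBox a) (Prf.genBox a)

theorem isRegular_conjK : ∀ G : List Agent, IsRegular Ax (conjK (Atom := Atom) (Event := Event) G)
  | [] => ⟨fun _ => Prf.taut fun _ => rfl⟩
  | i :: G => (isRegular_K i).and (isRegular_conjK G)

theorem isRegular_E (G : List Agent) : IsRegular Ax (E (Atom := Atom) (Event := Event) G) :=
  (isRegular_conjK G).of_iff (Prf.defE G)

theorem iterE_eq_iterate (G : List Agent) (n : ℕ) :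
    iterE (Atom := Atom) (Event := Event) G n = (E G)^[n] := by
  induction n with
  | zero => rfl
  | succ n ih => funext p; rw [Function.iterate_succ_apply', ← ih]; rfl

theorem iterBox_eq_iterate (a : Event) (n : ℕ) :
    iterBox (Atom := Atom) (Agent := Agent) a n = (box a)^[n] := by
  induction n with
  | zero => rfl
  | succ n ih => funext p; rw [Function.iterate_succ_apply', ← ih]; rfl

theorem iterE_succ' (G : List Agent) (n : ℕ) (p : Form Atom Agent Event) :
    iterE G (n + 1) p = iterE G n (E G p) := by
  simp only [iterE_eq_iterate, Function.iterate_succ_apply]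

theorem iterBox_succ' (a : Event) (n : ℕ) (p : Form Atom Agent Event) :
    iterBox a (n + 1) p = iterBox a n (box a p) := by
  simp only [iterBox_eq_iterate, Function.iterate_succ_apply]

theorem isRegular_iterE (G : List Agent) (n : ℕ) :
    IsRegular Ax (iterE (Atom := Atom) (Event := Event) G n) :=
  iterE_eq_iterate G n ▸ (isRegular_E G).iterate n

theorem isRegular_iterBox (a : Event) (n : ℕ) :
    IsRegular Ax (iterBox (Atom := Atom) (Agent := Agent) a n) :=
  iterBox_eq_iterate a n ▸ (isRegular_box a).iterate n

namespace Prf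

theorem E_imp {G : List Agent} (hG : G ≠ []) (p : Form Atom Agent Event) :
    Prf Ax ((E G p).imp p) := by
  obtain ⟨i, G, rfl⟩ := List.exists_cons_of_ne_nil hG
  exact (defE _ p).iff_mp_s11.imp_trans_s11 (and_left.imp_trans_s11 (tK i p))

theorem iterE_succ_imp {G : List Agent} (hG : G ≠ []) (n : ℕ) (p : Form Atom Agent Event) :
    Prf Ax ((iterE G (n + 1) p).imp (iterE G n p)) :=
  E_imp hG _

theorem C_imp_iterE (G : List Agent) (p : Form Atom Agent Event) :
    ∀ n, Prf Ax ((C G p).imp (iterE G n p))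
  | 0 => (fixC G p).imp_trans_s11 and_left
  | n + 1 => ((fixC G p).imp_trans_s11 and_right).imp_trans_s11 ((isRegular_E G).mono (C_imp_iterE G p n))

theorem conjK_box (a : Event) (p : Form Atom Agent Event) :
    ∀ G : List Agent, Prf Ax ((conjK G (box a p)).imp (box a (conjK G p)))
  | [] => imp_intro (genBox a (taut fun _ => rfl))
  | i :: G => imp_mp₂ (and_left.imp_trans_s11 (kt1 i a p)) (and_right.imp_trans_s11 (conjK_box a p G))
      ((isRegular_box a).imp_imp (taut fun v => by simp only [evalC, conjK]; grind))

theorem E_box (G : List Agent) (a : Event) (p : Form Atom Agent Event) :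
    Prf Ax ((E G (box a p)).imp (box a (E G p))) :=
  (defE G _).iff_mp_s11.imp_trans_s11 <| (conjK_box a p G).imp_trans_s11 <|
    (isRegular_box a).mono (defE G p).iff_mpr_s11

theorem iterE_box (G : List Agent) (a : Event) (p : Form Atom Agent Event) :
    ∀ n, Prf Ax ((iterE G n (box a p)).imp (box a (iterE G n p)))
  | 0 => imp_self
  | n + 1 => ((isRegular_E G).mono (iterE_box G a p n)).imp_trans_s11 (E_box G a _)

end Prf

end Form

open Form

section MuddyChildren

variable {Event : Type} {Ax : MForm Event → Prop} {G : List ℕ} {st : Event} {j : ℕ}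

theorem lam_imp_not_eps_imp_lam_succ
    (hEQ : Prf Ax ((eps j).iff ((lam j).and (lam (j + 1)).not))) :
    Prf Ax ((lam j).imp ((eps j).not.imp (lam (j + 1)))) :=
  hEQ.iff_mpr_s11.mp (Prf.taut fun v => by simp only [evalC]; grind)

/-- The paper's MultGainConn. -/
theorem iterE_lam_imp_box_iterE_lam_succ (hG : G ≠ [])
    (hMC2 : Prf Ax ((E G (E G (lam j))).imp (box st (E G (eps j).not))))
    (hPers : Prf Ax ((lam j).imp (box st (lam j))))
    (hEQ : Prf Ax ((eps j).iff ((lam j).and (lam (j + 1)).not))) (n : ℕ) :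
    Prf Ax ((iterE G (n + 2) (lam j)).imp (box st (iterE G (n + 1) (lam (j + 1))))) := by
  have persists : Prf Ax ((iterE G (n + 2) (lam j)).imp (box st (iterE G (n + 1) (lam j)))) :=
    (Prf.iterE_succ_imp hG _ _).imp_trans_s11 <|
      ((isRegular_iterE G (n + 1)).mono hPers).imp_trans_s11 (Prf.iterE_box G st _ _)
  have learns : Prf Ax ((iterE G (n + 2) (lam j)).imp (box st (iterE G (n + 1) (eps j).not))) := by
    simpa only [← iterE_succ'] using
      ((isRegular_iterE G n).mono hMC2).imp_trans_s11 (Prf.iterE_box G st _ n)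
  exact Prf.imp_mp₂ persists learns <| (isRegular_box st).imp_imp <|
    (isRegular_iterE G (n + 1)).imp_imp (lam_imp_not_eps_imp_lam_succ hEQ)

theorem imp_iterBox_iterE_lam {φ : MForm Event} (hG : G ≠ [])
    (hMC11 : Prf Ax (φ.imp (C G (lam 1))))
    (hMC2 : ∀ j, 1 ≤ j → Prf Ax ((E G (E G (lam j))).imp (box st (E G (eps j).not))))
    (hPers : ∀ j, Prf Ax ((lam j).imp (box st (lam j))))
    (hEQ : ∀ j, Prf Ax ((eps j).iff ((lam j).and (lam (j + 1)).not))) (k n : ℕ) :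
    Prf Ax (φ.imp (iterBox st k (iterE G n (lam (k + 1))))) := by
  induction k generalizing n with
  | zero => exact hMC11.imp_trans_s11 (Prf.C_imp_iterE G _ n)
  | succ k ih =>
    have gain := iterE_lam_imp_box_iterE_lam_succ hG (hMC2 (k + 1) k.succ_pos) (hPers _) (hEQ _) n
    have deeper := (ih (n + 2)).imp_trans_s11 ((isRegular_iterBox st k).mono gain)
    rw [← iterBox_succ'] at deeper
    exact deeper.imp_trans_s11 ((isRegular_iterBox st (k + 1)).mono (Prf.iterE_succ_imp hG _ _))

end MuddyChildren

/-- (PointImpProgr) For 1 ≤ j ≤ c+1: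
⊢ [¤] TRUE → [*]^{j-1} E_G^{c-j+1} λ_j. -/
theorem pointImpProgr {Event : Type} (Ax : MForm Event → Prop)
    (G : List ℕ) (hG : G ≠ []) (pt st : Event)
    (hMC11 : Form.Prf Ax (Form.imp (Form.box pt Form.tru) (Form.C G (lam 1))))
    (hMC2 : ∀ j : ℕ, 1 ≤ j →
      Form.Prf Ax (Form.imp (Form.E G (Form.E G (lam j)))
        (Form.box st (Form.E G (Form.not (eps j))))))
    (hPers : ∀ j : ℕ, Form.Prf Ax (Form.imp (lam j) (Form.box st (lam j))))
    (hEQ : ∀ j : ℕ, Form.Prf Ax (Form.iff (eps j) (Form.and (lam j) (Form.not (lam (j+1)))))) :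
    ∀ c j : ℕ, 1 ≤ j → j ≤ c + 1 →
      Form.Prf Ax (Form.imp (Form.box pt Form.tru)
        (Form.iterBox st (j-1) (Form.iterE G (c-j+1) (lam j)))) := by
  intro c j hj _
  obtain ⟨k, rfl⟩ := Nat.exists_eq_add_of_le' hj
  simpa using imp_iterBox_iterE_lam hG hMC11 hMC2 hPers hEQ k (c - (k + 1) + 1)
end
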